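/- arXiv:1005.4701 — 5 statements merged into one kernel-verified Lean document; each statement's English description precedes it below -/
import Mathlib

section
/- Let T > 0, let α be a probability measure on the interval [−T, 0], and let z : ℝ → ℝ be a measurable function with z(t) = 0 for t < 0 which is square integrable on [0, T]. Then ∫₀ᵀ ∫_{[−T,0]} |z(t+u)|² α(du) dt ≤ ∫₀ᵀ |z(v)|² dv. -/
/-!
Swap the order of integration (Tonelli). For a fixed delay `u ≤ 0` the inner integral
`∫₀ᵀ |z(t+u)|² dt` is the integral of `|z|²` over `[u, T+u]`, which is at most `∫₀ᵀ |z|²`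
because `z` vanishes at negative times; averaging over the probability measure `α` keeps the bound.
-/

open MeasureTheory Set
open scoped ENNReal

lemma indicator_Icc_comp_add_le {F : ℝ → ℝ≥0∞} (hF : ∀ v < 0, F v = 0) {u : ℝ} (hu : u ≤ 0)
    (T t : ℝ) : (Icc 0 T).indicator (fun t => F (t + u)) t ≤ (Icc 0 T).indicator F (t + u) := by
  by_cases ht : t ∈ Icc 0 T
  · rw [indicator_of_mem ht]
    rcases lt_or_ge (t + u) 0 with hneg | hnonneg
    · simp [hF _ hneg]
    · exact (indicator_of_mem (mem_Icc.2 ⟨hnonneg, by linarith [ht.2]⟩) F).ge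
  · simp [indicator_of_notMem ht]

lemma setLIntegral_Icc_comp_add_le {F : ℝ → ℝ≥0∞} (hF : ∀ v < 0, F v = 0) {u : ℝ} (hu : u ≤ 0)
    (T : ℝ) : ∫⁻ t in Icc 0 T, F (t + u) ≤ ∫⁻ t in Icc 0 T, F t :=
  calc ∫⁻ t in Icc 0 T, F (t + u)
      = ∫⁻ t, (Icc 0 T).indicator (fun t => F (t + u)) t :=
        (lintegral_indicator measurableSet_Icc _).symm
    _ ≤ ∫⁻ t, (Icc 0 T).indicator F (t + u) := lintegral_mono (indicator_Icc_comp_add_le hF hu T)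
    _ = ∫⁻ t, (Icc 0 T).indicator F t := lintegral_add_right_eq_self _ u
    _ = ∫⁻ t in Icc 0 T, F t := lintegral_indicator measurableSet_Icc _

lemma lintegral_lintegral_comp_add_le {F : ℝ → ℝ≥0∞} (hFm : Measurable F)
    (hF : ∀ v < 0, F v = 0) {α : Measure ℝ} [SFinite α] (hα : ∀ᵐ u ∂α, u ≤ 0) (T : ℝ) :
    ∫⁻ t in Icc 0 T, ∫⁻ u, F (t + u) ∂α ≤ α univ * ∫⁻ t in Icc 0 T, F t := by
  rw [lintegral_lintegral_swap (f := fun t u => F (t + u))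
    (hFm.comp measurable_add).aemeasurable]
  calc ∫⁻ u, (∫⁻ t in Icc 0 T, F (t + u)) ∂α
      ≤ ∫⁻ _, (∫⁻ t in Icc 0 T, F t) ∂α :=
        lintegral_mono_ae (hα.mono fun u hu => setLIntegral_Icc_comp_add_le hF hu T)
    _ = α univ * ∫⁻ t in Icc 0 T, F t := by rw [lintegral_const, mul_comm]

lemma integral_integral_comp_add_le {g : ℝ → ℝ} (hgm : Measurable g) (hg_nonneg : ∀ v, 0 ≤ g v)
    (hg : ∀ v < 0, g v = 0) {T : ℝ} (hgi : IntegrableOn g (Icc 0 T)) {α : Measure ℝ}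
    [IsProbabilityMeasure α] (hα : ∀ᵐ u ∂α, u ≤ 0) :
    ∫ t in Icc 0 T, ∫ u, g (t + u) ∂α ≤ ∫ t in Icc 0 T, g t := by
  have hinner (t : ℝ) :
      ENNReal.ofReal (∫ u, g (t + u) ∂α) ≤ ∫⁻ u, ENNReal.ofReal (g (t + u)) ∂α := by
    rw [integral_eq_lintegral_of_nonneg_ae (ae_of_all _ fun u => hg_nonneg _)
      (hgm.comp (measurable_const_add t)).aestronglyMeasurable]
    exact ENNReal.ofReal_toReal_le
  have houter_meas : AEStronglyMeasurable (fun t => ∫ u, g (t + u) ∂α)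
      (volume.restrict (Icc 0 T)) :=
    (hgm.comp measurable_add).stronglyMeasurable.integral_prod_right'.aestronglyMeasurable
  rw [integral_eq_lintegral_of_nonneg_ae
      (ae_of_all _ fun t => integral_nonneg fun u => hg_nonneg _) houter_meas,
    integral_eq_lintegral_of_nonneg_ae (ae_of_all _ hg_nonneg) hgm.aestronglyMeasurable]
  refine ENNReal.toReal_mono ((hasFiniteIntegral_iff_ofReal (ae_of_all _ hg_nonneg)).1 hgi.2).ne ?_
  calc ∫⁻ t in Icc 0 T, ENNReal.ofReal (∫ u, g (t + u) ∂α)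
      ≤ ∫⁻ t in Icc 0 T, ∫⁻ u, ENNReal.ofReal (g (t + u)) ∂α := lintegral_mono hinner
    _ ≤ α univ * ∫⁻ t in Icc 0 T, ENNReal.ofReal (g t) :=
        lintegral_lintegral_comp_add_le (ENNReal.measurable_ofReal.comp hgm)
          (fun v hv => by simp [hg v hv]) hα T
    _ = ∫⁻ t in Icc 0 T, ENNReal.ofReal (g t) := by rw [measure_univ, one_mul]

theorem delay_estimate_basic_general
    (T : ℝ)
    (α : Measure ℝ) [IsProbabilityMeasure α] (hα : α (Set.Icc (-T) 0) = 1)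
    (z : ℝ → ℝ) (hz : Measurable z) (hz0 : ∀ t < 0, z t = 0)
    (hzint : IntegrableOn (fun v => |z v| ^ 2) (Set.Icc 0 T)) :
    ∫ t in Set.Icc 0 T, (∫ u, |z (t + u)| ^ 2 ∂α)
      ≤ ∫ v in Set.Icc 0 T, |z v| ^ 2 := by
  have hα_nonpos : ∀ᵐ u ∂α, u ≤ 0 := by
    have hα_ae : ∀ᵐ u ∂α, u ∈ Icc (-T) 0 :=
      (ae_mem_iff_measure_eq measurableSet_Icc.nullMeasurableSet).2 (by rw [hα, measure_univ])
    exact hα_ae.mono fun u hu => hu.2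
  exact integral_integral_comp_add_le (hz.abs.pow_const 2) (fun v => by positivity)
    (fun v hv => by simp [hz0 v hv]) hzint hα_nonpos

/-- For `T > 0`, a probability measure `α` on `[-T, 0]`, and a measurable
function `z : ℝ → ℝ` vanishing on negatives and square integrable on `[0, T]`, we have
`∫₀ᵀ ∫_{[-T,0]} |z(t+u)|² α(du) dt ≤ ∫₀ᵀ |z(v)|² dv`. -/
theorem delay_estimate_basic
    (T : ℝ) (hT : 0 < T)
    (α : Measure ℝ) [IsProbabilityMeasure α] (hα : α (Set.Icc (-T) 0) = 1)
    (z : ℝ → ℝ) (hz : Measurable z) (hz0 : ∀ t < 0, z t = 0)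
    (hzint : IntegrableOn (fun v => |z v| ^ 2) (Set.Icc 0 T)) :
    ∫ t in Set.Icc 0 T, (∫ u, |z (t + u)| ^ 2 ∂α)
      ≤ ∫ v in Set.Icc 0 T, |z v| ^ 2 :=
  delay_estimate_basic_general T α hα z hz hz0 hzint
end

section
/- Let T > 0, β > 0, let α be a probability measure on the interval [−T, 0], and let z : ℝ → ℝ be a measurable function with z(t) = 0 for t < 0 which is square integrable on [0, T]. Then ∫₀ᵀ e^{βt} (∫_{[−T,0]} |z(t+u)|² α(du)) dt ≤ (∫_{[−T,0]} e^{−βu} α(du)) · ∫₀ᵀ e^{βv} |z(v)|² dv. -/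
open MeasureTheory

/-- For `T > 0`, `β > 0`, a probability measure `α` on `[-T, 0]`, and a
measurable function `z : ℝ → ℝ` vanishing on negatives and square integrable on `[0, T]`,
`∫₀ᵀ e^{βt} (∫_{[-T,0]} |z(t+u)|² α(du)) dt
  ≤ (∫_{[-T,0]} e^{-βu} α(du)) · ∫₀ᵀ e^{βv} |z(v)|² dv`. -/
theorem delay_estimate_weighted
    (T β : ℝ) (hT : 0 < T) (hβ : 0 < β)
    (α : Measure ℝ) [IsProbabilityMeasure α] (hα : α (Set.Icc (-T) 0) = 1)
    (z : ℝ → ℝ) (hz : Measurable z) (hz0 : ∀ t < 0, z t = 0)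
    (hzint : IntegrableOn (fun v => |z v| ^ 2) (Set.Icc 0 T)) :
    ∫ t in Set.Icc 0 T, Real.exp (β * t) * (∫ u, |z (t + u)| ^ 2 ∂α)
      ≤ (∫ u, Real.exp (-β * u) ∂α) * ∫ v in Set.Icc 0 T, Real.exp (β * v) * |z v| ^ 2 := by
  classical
  -- notation
  set g : ℝ → ENNReal := fun v => ENNReal.ofReal (Real.exp (β * v) * |z v| ^ 2) with hg
  have hgmeas : Measurable g := by
    apply Measurable.ennreal_ofReal
    exact ((Real.measurable_exp.comp (measurable_const_mul β)).mul
      ((hz.abs.pow_const 2)))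
  have hzsq_meas : Measurable fun v => |z v| ^ 2 := hz.abs.pow_const 2
  -- C : weighted L² norm as a lintegral
  set C : ENNReal := ∫⁻ v in Set.Icc 0 T, g v with hC
  -- g vanishes on negatives
  have hgzero : ∀ v < 0, g v = 0 := by
    intro v hv
    simp [hg, hz0 v hv]
  -- C is finite
  have hCfin : C < ⊤ := by
    have hle : ∀ v ∈ Set.Icc 0 T, g v ≤ ENNReal.ofReal (Real.exp (β * T)) *
        ENNReal.ofReal (|z v| ^ 2) := by
      intro v hv
      rw [hg, ← ENNReal.ofReal_mul (Real.exp_nonneg _)]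
      apply ENNReal.ofReal_le_ofReal
      apply mul_le_mul_of_nonneg_right _ (sq_nonneg _)
      exact Real.exp_le_exp.2 (mul_le_mul_of_nonneg_left hv.2 hβ.le)
    calc C ≤ ∫⁻ v in Set.Icc 0 T, ENNReal.ofReal (Real.exp (β * T)) *
            ENNReal.ofReal (|z v| ^ 2) := by
          apply setLIntegral_mono (by fun_prop) hle
      _ = ENNReal.ofReal (Real.exp (β * T)) *
            ∫⁻ v in Set.Icc 0 T, ENNReal.ofReal (|z v| ^ 2) := by
          rw [lintegral_const_mul _ (by fun_prop)]
      _ < ⊤ := by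
          apply ENNReal.mul_lt_top ENNReal.ofReal_lt_top
          exact hzint.lintegral_lt_top
  -- key translation estimate
  have hkey : ∀ u ∈ Set.Icc (-T) 0,
      (∫⁻ t in Set.Icc 0 T, ENNReal.ofReal (Real.exp (β * t) * |z (t + u)| ^ 2))
        ≤ ENNReal.ofReal (Real.exp (-β * u)) * C := by
    intro u hu
    have h1 : ∀ t : ℝ, ENNReal.ofReal (Real.exp (β * t) * |z (t + u)| ^ 2)
        = ENNReal.ofReal (Real.exp (-β * u)) * g (t + u) := by
      intro t
      rw [hg, ← ENNReal.ofReal_mul (Real.exp_nonneg _), ← mul_assoc, ← Real.exp_add]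
      ring_nf
    simp_rw [h1]
    rw [lintegral_const_mul' _ _ ENNReal.ofReal_ne_top]
    apply mul_le_mul_right _ _
    -- ∫⁻ t in Icc 0 T, g (t + u) ≤ C
    have h2 : (∫⁻ t in Set.Icc 0 T, g (t + u))
        = ∫⁻ t, (Set.Icc u (T + u)).indicator g (t + u) := by
      rw [← lintegral_indicator measurableSet_Icc]
      congr 1
      ext t
      by_cases ht : t ∈ Set.Icc 0 T
      · rw [Set.indicator_of_mem ht, Set.indicator_of_mem]
        constructor
        · linarith [ht.1]
        · linarith [ht.2]
      · rw [Set.indicator_of_notMem ht, Set.indicator_of_notMem]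
        intro hmem
        apply ht
        constructor
        · linarith [hmem.1]
        · linarith [hmem.2]
    rw [h2, lintegral_add_right_eq_self _ u]
    rw [lintegral_indicator measurableSet_Icc]
    -- integrand vanishes on negatives, so restrict to Icc u (T+u) ∩ Ici 0 ⊆ Icc 0 T
    have h3 : (∫⁻ v in Set.Icc u (T + u), g v)
        = ∫⁻ v in Set.Icc u (T + u) ∩ Set.Ici 0, g v := by
      rw [← lintegral_indicator (measurableSet_Icc.inter measurableSet_Ici),
        ← lintegral_indicator measurableSet_Icc]
      congr 1
      ext v
      by_cases hv : v < 0
      · by_cases hvm : v ∈ Set.Icc u (T + u) <;>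
          simp [Set.indicator_apply, hv, hvm, hgzero v hv, not_le.2 hv]
      · push_neg at hv
        by_cases hvm : v ∈ Set.Icc u (T + u) <;>
          simp [Set.indicator_apply, hvm, hv]
    rw [h3]
    apply lintegral_mono_set
    intro v hv
    obtain ⟨⟨hv1, hv2⟩, hv3⟩ := hv
    constructor
    · exact hv3
    · have := hu.2; linarith
  -- a.e. support of α in Icc (-T) 0
  have hαae : ∀ᵐ u ∂α, u ∈ Set.Icc (-T) 0 := by
    rw [ae_iff]
    have hcompl := measure_compl (μ := α) (s := Set.Icc (-T) 0) measurableSet_Icc (measure_ne_top _ _)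
    rw [measure_univ, hα, tsub_self] at hcompl
    simpa only [Set.compl_def, Set.mem_Icc, not_and, not_le] using hcompl
  -- K : the exponential moment of α
  set K : ENNReal := ∫⁻ u, ENNReal.ofReal (Real.exp (-β * u)) ∂α with hK
  have hKmeas : Measurable fun u : ℝ => ENNReal.ofReal (Real.exp (-β * u)) := by
    fun_prop
  have hKfin : K < ⊤ := by
    have : K ≤ ∫⁻ _, ENNReal.ofReal (Real.exp (β * T)) ∂α := by
      apply lintegral_mono_ae
      filter_upwards [hαae] with u hu
      apply ENNReal.ofReal_le_ofReal
      apply Real.exp_le_exp.2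
      nlinarith [hu.1, hβ.le]
    rw [lintegral_const] at this
    simp only [measure_univ, mul_one] at this
    exact lt_of_le_of_lt this ENNReal.ofReal_lt_top
  -- product measurability
  have hprod : Measurable fun p : ℝ × ℝ =>
      ENNReal.ofReal (Real.exp (β * p.1) * |z (p.1 + p.2)| ^ 2) := by
    apply Measurable.ennreal_ofReal
    apply Measurable.mul
    · fun_prop
    · exact (hz.comp (measurable_fst.add measurable_snd)).abs.pow_const 2
  -- the main lintegral bound
  set G : ℝ → ENNReal := fun t =>
    ENNReal.ofReal (Real.exp (β * t)) * ∫⁻ u, ENNReal.ofReal (|z (t + u)| ^ 2) ∂α with hG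
  have hGmeas : Measurable G := by
    apply Measurable.mul (by fun_prop)
    apply Measurable.lintegral_prod_right
    exact ((hz.comp (measurable_fst.add measurable_snd)).abs.pow_const 2).ennreal_ofReal
  have hGeq : ∀ t : ℝ, G t = ∫⁻ u, ENNReal.ofReal (Real.exp (β * t) * |z (t + u)| ^ 2) ∂α := by
    intro t
    show ENNReal.ofReal (Real.exp (β * t)) *
        (∫⁻ u, ENNReal.ofReal (|z (t + u)| ^ 2) ∂α) = _
    rw [← lintegral_const_mul' _ _ ENNReal.ofReal_ne_top]
    congr 1
    ext u
    rw [← ENNReal.ofReal_mul (Real.exp_nonneg _)]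
  set A : ENNReal := ∫⁻ t in Set.Icc 0 T, G t with hA
  have hAle : A ≤ K * C := by
    have hswap : A = ∫⁻ u, (∫⁻ t in Set.Icc 0 T,
        ENNReal.ofReal (Real.exp (β * t) * |z (t + u)| ^ 2)) ∂α := by
      rw [hA]
      simp_rw [hGeq]
      exact lintegral_lintegral_swap hprod.aemeasurable
    rw [hswap]
    calc (∫⁻ u, (∫⁻ t in Set.Icc 0 T,
          ENNReal.ofReal (Real.exp (β * t) * |z (t + u)| ^ 2)) ∂α)
        ≤ ∫⁻ u, ENNReal.ofReal (Real.exp (-β * u)) * C ∂α := by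
          apply lintegral_mono_ae
          filter_upwards [hαae] with u hu
          exact hkey u hu
      _ = K * C := lintegral_mul_const _ hKmeas
  have hAfin : A < ⊤ := lt_of_le_of_lt hAle (ENNReal.mul_lt_top hKfin hCfin)
  -- rewrite LHS
  have hLHS : (∫ t in Set.Icc 0 T, Real.exp (β * t) * (∫ u, |z (t + u)| ^ 2 ∂α))
      = A.toReal := by
    have h1 : ∀ t : ℝ, Real.exp (β * t) * (∫ u, |z (t + u)| ^ 2 ∂α) = (G t).toReal := by
      intro t
      have hinner : (∫ u, |z (t + u)| ^ 2 ∂α)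
          = (∫⁻ u, ENNReal.ofReal (|z (t + u)| ^ 2) ∂α).toReal := by
        rw [integral_eq_lintegral_of_nonneg_ae]
        · exact Filter.Eventually.of_forall fun u => sq_nonneg _
        · exact (((hz.comp (measurable_const_add t)).abs.pow_const 2)).aestronglyMeasurable
      rw [hinner, hG, ENNReal.toReal_mul, ENNReal.toReal_ofReal (Real.exp_nonneg _)]
    simp_rw [h1]
    exact integral_toReal hGmeas.aemeasurable (ae_lt_top hGmeas hAfin.ne)
  -- rewrite RHS factors
  have hR1 : (∫ u, Real.exp (-β * u) ∂α) = K.toReal := by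
    rw [hK, integral_eq_lintegral_of_nonneg_ae]
    · exact Filter.Eventually.of_forall fun u => Real.exp_nonneg _
    · exact (Real.measurable_exp.comp (measurable_const_mul (-β))).aestronglyMeasurable
  have hR2 : (∫ v in Set.Icc 0 T, Real.exp (β * v) * |z v| ^ 2) = C.toReal := by
    rw [hC, integral_eq_lintegral_of_nonneg_ae]
    · exact Filter.Eventually.of_forall fun v =>
        mul_nonneg (Real.exp_nonneg _) (sq_nonneg _)
    · apply Measurable.aestronglyMeasurable
      exact ((Real.measurable_exp.comp (measurable_const_mul β)).mul (hz.abs.pow_const 2))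
  rw [hLHS, hR1, hR2, ← ENNReal.toReal_mul]
  exact ENNReal.toReal_mono (ENNReal.mul_lt_top hKfin hCfin).ne hAle
end

section
/- Let T > 0, β > 0, let α be a probability measure on the interval [−T, 0], and let y : ℝ → ℝ be a measurable function which is bounded on [0, T] and satisfies y(t) = y(0) for t < 0. Then ∫₀ᵀ e^{βt} (∫_{[−T,0]} |y(t+u)|² α(du)) dt ≤ (∫_{[−T,0]} e^{−βu} α(du)) · T · sup_{v ∈ [0,T]} e^{βv} |y(v)|². -/
/-!
Put `S := sup_{v ∈ [0,T]} e^{βv} |y v|²`. For `t ∈ [0,T]` and `u ∈ [-T,0]` the point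
`s := max (t + u) 0` lies in `[0,T]`, satisfies `y (t + u) = y s` because `y` is constant on
`(-∞, 0]`, and `β t ≤ -β u + β s`; hence `e^{βt} |y (t + u)|² ≤ e^{-βu} S`. Integrating in `u`
against `α` and then in `t` over `[0,T]` gives the estimate.
-/

open MeasureTheory Set Real

section ExpWeightedShift

variable {f : ℝ → ℝ} {β T S : ℝ}

lemma bddAbove_range_exp_mul_of_le (hβ : 0 ≤ β) (hf : 0 ≤ f) {C : ℝ}
    (hC : ∀ v ∈ Icc 0 T, f v ≤ C) :
    BddAbove (range fun v : Icc (0 : ℝ) T => exp (β * v) * f v) := by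
  refine ⟨exp (β * T) * C, ?_⟩
  rintro _ ⟨⟨v, hv⟩, rfl⟩
  exact mul_le_mul (exp_le_exp.2 (mul_le_mul_of_nonneg_left hv.2 hβ)) (hC v hv) (hf v)
    (exp_pos _).le

lemma exp_mul_mul_apply_add_le (hβ : 0 ≤ β) (hf : 0 ≤ f) (hf0 : ∀ t < 0, f t = f 0)
    (hS : ∀ v ∈ Icc 0 T, exp (β * v) * f v ≤ S) {t u : ℝ} (ht : t ∈ Icc 0 T) (hu : u ≤ 0) :
    exp (β * t) * f (t + u) ≤ exp (-β * u) * S := by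
  set s := max (t + u) 0 with hs_def
  have hs : s ∈ Icc 0 T := ⟨le_max_right _ _, max_le (by linarith [ht.2]) (ht.1.trans ht.2)⟩
  have hfs : f (t + u) = f s := by
    rcases lt_or_ge (t + u) 0 with h | h
    · rw [hf0 _ h, hs_def, max_eq_right h.le]
    · rw [hs_def, max_eq_left h]
  have hexp : exp (β * t) ≤ exp (-β * u) * exp (β * s) := by
    rw [← exp_add]
    exact exp_le_exp.2 (by nlinarith [le_max_left (t + u) 0])
  calc exp (β * t) * f (t + u) ≤ exp (-β * u) * exp (β * s) * f s :=
        hfs ▸ mul_le_mul_of_nonneg_right hexp (hf _)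
    _ = exp (-β * u) * (exp (β * s) * f s) := mul_assoc _ _ _
    _ ≤ exp (-β * u) * S := mul_le_mul_of_nonneg_left (hS s hs) (exp_pos _).le

lemma exp_mul_mul_integral_apply_add_le {α : Measure ℝ} (hβ : 0 ≤ β) (hf : 0 ≤ f)
    (hf0 : ∀ t < 0, f t = f 0) (hS : ∀ v ∈ Icc 0 T, exp (β * v) * f v ≤ S)
    (hα : ∀ᵐ u ∂α, u ≤ 0) (hint : Integrable (fun u => exp (-β * u)) α)
    {t : ℝ} (ht : t ∈ Icc 0 T) :
    exp (β * t) * ∫ u, f (t + u) ∂α ≤ S * ∫ u, exp (-β * u) ∂α := by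
  rw [← integral_const_mul, ← integral_const_mul]
  refine integral_mono_of_nonneg (.of_forall fun u => mul_nonneg (exp_pos _).le (hf _))
    (hint.const_mul S) ?_
  filter_upwards [hα] with u hu
  rw [mul_comm S]
  exact exp_mul_mul_apply_add_le hβ hf hf0 hS ht hu

end ExpWeightedShift

theorem delay_estimate_sup_general
    (T β : ℝ) (hT : 0 < T) (hβ : 0 < β)
    (α : Measure ℝ) [IsProbabilityMeasure α] (hα : α (Set.Icc (-T) 0) = 1)
    (y : ℝ → ℝ)
    (hybdd : ∃ C, ∀ v ∈ Set.Icc (0 : ℝ) T, |y v| ≤ C)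
    (hy0 : ∀ t < 0, y t = y 0) :
    ∫ t in Set.Icc 0 T, Real.exp (β * t) * (∫ u, |y (t + u)| ^ 2 ∂α)
      ≤ (∫ u, Real.exp (-β * u) ∂α) * T *
        ⨆ v : Set.Icc (0 : ℝ) T, Real.exp (β * (v : ℝ)) * |y (v : ℝ)| ^ 2 := by
  obtain ⟨C, hC⟩ := hybdd
  set S := ⨆ v : Icc (0 : ℝ) T, exp (β * (v : ℝ)) * |y (v : ℝ)| ^ 2
  have hsq : 0 ≤ fun v => |y v| ^ 2 := fun v => sq_nonneg _
  have hbdd := bddAbove_range_exp_mul_of_le hβ.le hsq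
    fun v hv => pow_le_pow_left₀ (abs_nonneg _) (hC v hv) 2
  have hS : ∀ v ∈ Icc 0 T, exp (β * v) * |y v| ^ 2 ≤ S := fun v hv => le_ciSup hbdd ⟨v, hv⟩
  have hαIcc : ∀ᵐ u ∂α, u ∈ Icc (-T) 0 := (mem_ae_iff_prob_eq_one measurableSet_Icc).2 hα
  have hint : Integrable (fun u => exp (-β * u)) α := by
    rw [← Measure.restrict_eq_self_of_ae_mem hαIcc]
    exact (continuous_const.mul continuous_id).rexp.integrableOn_Icc
  have hinner : ∀ t ∈ Icc 0 T, ‖exp (β * t) * ∫ u, |y (t + u)| ^ 2 ∂α‖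
      ≤ S * ∫ u, exp (-β * u) ∂α := fun t ht => by
    rw [Real.norm_of_nonneg (by positivity)]
    exact exp_mul_mul_integral_apply_add_le hβ.le hsq (fun t ht => by rw [hy0 t ht]) hS
      (hαIcc.mono fun u hu => hu.2) hint ht
  calc ∫ t in Icc 0 T, exp (β * t) * (∫ u, |y (t + u)| ^ 2 ∂α)
      ≤ ‖∫ t in Icc 0 T, exp (β * t) * (∫ u, |y (t + u)| ^ 2 ∂α)‖ := le_norm_self _
    _ ≤ (S * ∫ u, exp (-β * u) ∂α) * volume.real (Icc 0 T) :=
        norm_setIntegral_le_of_norm_le_const measure_Icc_lt_top hinner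
    _ = (∫ u, exp (-β * u) ∂α) * T * S := by
        rw [Real.volume_real_Icc_of_le hT.le, sub_zero]; ring

/-- For `T > 0`, `β > 0`, a probability measure `α` on `[-T, 0]`, and a
measurable function `y : ℝ → ℝ` bounded on `[0, T]` with `y(t) = y(0)` for `t < 0`,
`∫₀ᵀ e^{βt} (∫_{[-T,0]} |y(t+u)|² α(du)) dt
  ≤ (∫_{[-T,0]} e^{-βu} α(du)) · T · sup_{v ∈ [0,T]} e^{βv} |y(v)|²`. -/
theorem delay_estimate_sup
    (T β : ℝ) (hT : 0 < T) (hβ : 0 < β)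
    (α : Measure ℝ) [IsProbabilityMeasure α] (hα : α (Set.Icc (-T) 0) = 1)
    (y : ℝ → ℝ) (hy : Measurable y)
    (hybdd : ∃ C, ∀ v ∈ Set.Icc (0 : ℝ) T, |y v| ≤ C)
    (hy0 : ∀ t < 0, y t = y 0) :
    ∫ t in Set.Icc 0 T, Real.exp (β * t) * (∫ u, |y (t + u)| ^ 2 ∂α)
      ≤ (∫ u, Real.exp (-β * u) ∂α) * T *
        ⨆ v : Set.Icc (0 : ℝ) T, Real.exp (β * (v : ℝ)) * |y (v : ℝ)| ^ 2 :=
  delay_estimate_sup_general T β hT hβ α hα y hybdd hy0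
end

section
/- Let T > 0, let α be a probability measure on the interval [−T, 0], and let g, Z : ℝ → ℝ be measurable functions with g(v) = Z(v) = 0 for v < 0 such that the product g·Z is integrable on [0, T]. Then for every t ∈ [0, T]: ∫ₜᵀ (∫_{[−T,0]} g(s+u) Z(s+u) α(du)) ds = ∫₀ᵀ α((v−T, (v−t) ∧ 0]) g(v) Z(v) dv, where α((a, b]) denotes the α-measure of the half-open interval (a, b] (interpreted as 0 when b ≤ a) and ∧ denotes minimum. -/
/-!
Both sides equal `∫ (∫_{t+u}^{T+u} g Z dv) α(du)`. On the left this is Fubini followed by the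
shift `v = s + u`; it is legitimate because `α` lives on `u ≤ 0`, so `s + u ≤ T`, and `g Z`,
which vanishes on the negatives, is integrable on `(-∞, T]`. On the right, write
`α((v - T, (v - t) ∧ 0])` as the `α`-integral of the indicator of the region
`{(v, u) | v - T < u ≤ (v - t) ∧ 0}` and swap the integrals: for `u ≤ 0` the `u`-section of that
region is `[t + u, T + u)`, and cutting it down to `(0, T]` loses only points where `g Z`
vanishes and a Lebesgue-null set.
-/

open MeasureTheory Set
open scoped ENNReal

variable {E : Type*} [NormedAddCommGroup E]

lemma integrableOn_Iic_of_eq_zero_of_neg {h : ℝ → E} {T : ℝ} (hh0 : ∀ v < 0, h v = 0)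
    (hint : IntegrableOn h (Icc 0 T)) : IntegrableOn h (Iic T) :=
  hint.of_forall_sdiff_eq_zero measurableSet_Iic
    fun v ⟨hvT, hv⟩ => hh0 v (not_le.1 fun hv0 => hv ⟨hv0, hvT⟩)

lemma integral_measureReal_preimage_prodMk_smul [NormedSpace ℝ E] [CompleteSpace E]
    {X Y : Type*} [MeasurableSpace X] [MeasurableSpace Y] {μ : Measure X} {ν : Measure Y}
    [SFinite μ] [IsFiniteMeasure ν] {S : Set (X × Y)} (hS : MeasurableSet S) {h : X → E}
    (hh : Integrable h μ) :
    ∫ x, ν.real (Prod.mk x ⁻¹' S) • h x ∂μ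
      = ∫ y, (∫ x, S.indicator (fun p => h p.1) (x, y) ∂μ) ∂ν := by
  calc ∫ x, ν.real (Prod.mk x ⁻¹' S) • h x ∂μ
      = ∫ x, (∫ y, S.indicator (fun p => h p.1) (x, y) ∂ν) ∂μ := by
        congr 1 with x
        rw [← integral_indicator_const _ (measurable_prodMk_left hS)]
        rfl
    _ = ∫ y, (∫ x, S.indicator (fun p => h p.1) (x, y) ∂μ) ∂ν :=
        integral_integral_swap ((hh.comp_fst ν).indicator hS)

section Delay

variable {μ : Measure ℝ} {h : ℝ → E} {t T : ℝ}

lemma integrable_comp_add_prod [IsFiniteMeasure μ] (hμ : ∀ᵐ u ∂μ, u ≤ 0)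
    (hh : StronglyMeasurable h) (hint : IntegrableOn h (Iic T)) :
    Integrable (fun p : ℝ × ℝ => h (p.1 + p.2)) ((volume.restrict (Ioc t T)).prod μ) := by
  have hmeas : StronglyMeasurable fun p : ℝ × ℝ => h (p.1 + p.2) :=
    hh.comp_measurable (measurable_fst.add measurable_snd)
  have hshift : ∀ᵐ u ∂μ, ∫⁻ s in Ioc t T, ‖h (s + u)‖ₑ ≤ ∫⁻ v in Iic T, ‖h v‖ₑ := by
    filter_upwards [hμ] with u hu
    calc ∫⁻ s in Ioc t T, ‖h (s + u)‖ₑ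
        = ∫⁻ s in Ioc t T, (Iic T).indicator (fun v => ‖h v‖ₑ) (s + u) :=
          setLIntegral_congr_fun measurableSet_Ioc fun s hs => by
            rw [indicator_of_mem (mem_Iic.2 (by linarith [hs.2]))]
      _ ≤ ∫⁻ s, (Iic T).indicator (fun v => ‖h v‖ₑ) (s + u) := setLIntegral_le_lintegral _ _
      _ = ∫⁻ v in Iic T, ‖h v‖ₑ := by
          rw [lintegral_add_right_eq_self, lintegral_indicator measurableSet_Iic]
  refine ⟨hmeas.aestronglyMeasurable, ?_⟩
  calc ∫⁻ p, ‖h (p.1 + p.2)‖ₑ ∂(volume.restrict (Ioc t T)).prod μ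
      = ∫⁻ u, (∫⁻ s in Ioc t T, ‖h (s + u)‖ₑ) ∂μ := lintegral_prod_symm' _ hmeas.enorm
    _ ≤ ∫⁻ _, (∫⁻ v in Iic T, ‖h v‖ₑ) ∂μ := lintegral_mono_ae hshift
    _ < ∞ := by
        rw [lintegral_const]
        exact ENNReal.mul_lt_top hint.2 (measure_lt_top μ univ)

lemma intervalIntegral_integral_comp_add [NormedSpace ℝ E] [IsFiniteMeasure μ]
    (hμ : ∀ᵐ u ∂μ, u ≤ 0) (hh : StronglyMeasurable h) (hint : IntegrableOn h (Iic T))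
    (htT : t ≤ T) :
    ∫ s in t..T, ∫ u, h (s + u) ∂μ = ∫ u, (∫ v in t + u..T + u, h v) ∂μ := by
  rw [intervalIntegral.integral_of_le htT,
    integral_integral_swap (f := fun s u => h (s + u)) (integrable_comp_add_prod hμ hh hint)]
  simp_rw [← intervalIntegral.integral_of_le htT, intervalIntegral.integral_comp_add_right]

lemma setIntegral_Ioc_indicator_Ico [NormedSpace ℝ E] (hh0 : ∀ v < 0, h v = 0) {a b : ℝ}
    (hab : a ≤ b) (hbT : b ≤ T) :
    ∫ v in Ioc 0 T, (Ico a b).indicator h v = ∫ v in a..b, h v := by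
  have hvanish : EqOn ((Icc 0 T).indicator h) h (Ico a b) := fun v hv => by
    rcases lt_or_ge v 0 with hv0 | hv0
    · rw [indicator_of_notMem (fun hv' => hv0.not_ge hv'.1), hh0 v hv0]
    · exact indicator_of_mem (show v ∈ Icc 0 T from ⟨hv0, hv.2.le.trans hbT⟩) h
  calc ∫ v in Ioc 0 T, (Ico a b).indicator h v
      = ∫ v in Icc 0 T ∩ Ico a b, h v := by
        rw [← integral_Icc_eq_integral_Ioc, setIntegral_indicator measurableSet_Ico]
    _ = ∫ v in Ico a b, (Icc 0 T).indicator h v := by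
        rw [setIntegral_indicator measurableSet_Icc, inter_comm]
    _ = ∫ v in a..b, h v := by
        rw [setIntegral_congr_fun measurableSet_Ico hvanish, integral_Ico_eq_integral_Ioc,
          intervalIntegral.integral_of_le hab]

def delayRegion (t T : ℝ) : Set (ℝ × ℝ) := {p | p.2 ∈ Ioc (p.1 - T) (min (p.1 - t) 0)}

lemma measurableSet_delayRegion (t T : ℝ) : MeasurableSet (delayRegion t T) :=
  (measurableSet_lt (measurable_fst.sub_const T) measurable_snd).inter
    (measurableSet_le measurable_snd ((measurable_fst.sub_const t).min measurable_const))

lemma indicator_delayRegion_of_nonpos {u : ℝ} (hu : u ≤ 0) (v : ℝ) :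
    (delayRegion t T).indicator (fun p => h p.1) (v, u) = (Ico (t + u) (T + u)).indicator h v := by
  have hmem : (v, u) ∈ delayRegion t T ↔ v ∈ Ico (t + u) (T + u) := by
    simp only [delayRegion, mem_ofPred_eq, mem_Ioc, mem_Ico, le_min_iff]
    constructor
    · rintro ⟨h₁, h₂, -⟩; constructor <;> linarith
    · rintro ⟨h₁, h₂⟩; exact ⟨by linarith, by linarith, hu⟩
  exact indicator_eq_indicator hmem rfl

end Delay

theorem linear_generator_fubini_general
    (T : ℝ)
    (α : Measure ℝ) [IsProbabilityMeasure α] (hα : α (Set.Icc (-T) 0) = 1)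
    (g Z : ℝ → ℝ) (hg : Measurable g) (hZ : Measurable Z)
    (hg0 : ∀ v < 0, g v = 0)
    (hgZ : IntegrableOn (fun v => g v * Z v) (Set.Icc 0 T)) :
    ∀ t ∈ Set.Icc (0 : ℝ) T,
      ∫ s in t..T, (∫ u, g (s + u) * Z (s + u) ∂α)
        = ∫ v in (0 : ℝ)..T, (α (Set.Ioc (v - T) (min (v - t) 0))).toReal * (g v * Z v) := by
  rintro t ⟨ht0, htT⟩
  set h : ℝ → ℝ := fun v => g v * Z v
  have hh0 : ∀ v < 0, h v = 0 := fun v hv => by simp [h, hg0 v hv]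
  have hα0 : ∀ᵐ u ∂α, u ≤ 0 := by
    filter_upwards [mem_ae_iff.2 ((prob_compl_eq_zero_iff measurableSet_Icc).2 hα)] with u hu
    exact hu.2
  calc ∫ s in t..T, (∫ u, h (s + u) ∂α)
      = ∫ u, (∫ v in t + u..T + u, h v) ∂α :=
        intervalIntegral_integral_comp_add hα0 (hg.mul hZ).stronglyMeasurable
          (integrableOn_Iic_of_eq_zero_of_neg hh0 hgZ) htT
    _ = ∫ u, (∫ v in Ioc 0 T, (delayRegion t T).indicator (fun p => h p.1) (v, u)) ∂α :=
        integral_congr_ae <| hα0.mono fun u hu => by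
          simp only [indicator_delayRegion_of_nonpos hu, setIntegral_Ioc_indicator_Ico hh0
            (by linarith : t + u ≤ T + u) (by linarith : T + u ≤ T)]
    _ = ∫ v in Ioc 0 T, α.real (Prod.mk v ⁻¹' delayRegion t T) * h v :=
        (integral_measureReal_preimage_prodMk_smul (measurableSet_delayRegion t T)
          (hgZ.mono_set Ioc_subset_Icc_self)).symm
    _ = ∫ v in (0 : ℝ)..T, (α (Ioc (v - T) (min (v - t) 0))).toReal * h v :=
        (intervalIntegral.integral_of_le (ht0.trans htT)).symm

/-- Fubini/change-of-variables identity for the linear time delayed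
generator: for `g, Z` measurable, vanishing on negatives, with `g·Z` integrable on
`[0,T]`, and every `t ∈ [0,T]`,
`∫ₜᵀ (∫_{[-T,0]} g(s+u) Z(s+u) α(du)) ds = ∫₀ᵀ α((v−T, (v−t) ∧ 0]) g(v) Z(v) dv`. -/
theorem linear_generator_fubini
    (T : ℝ) (hT : 0 < T)
    (α : Measure ℝ) [IsProbabilityMeasure α] (hα : α (Set.Icc (-T) 0) = 1)
    (g Z : ℝ → ℝ) (hg : Measurable g) (hZ : Measurable Z)
    (hg0 : ∀ v < 0, g v = 0) (hZ0 : ∀ v < 0, Z v = 0)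
    (hgZ : IntegrableOn (fun v => g v * Z v) (Set.Icc 0 T)) :
    ∀ t ∈ Set.Icc (0 : ℝ) T,
      ∫ s in t..T, (∫ u, g (s + u) * Z (s + u) ∂α)
        = ∫ v in (0 : ℝ)..T, (α (Set.Ioc (v - T) (min (v - t) 0))).toReal * (g v * Z v) :=
  linear_generator_fubini_general T α hα g Z hg hZ hg0 hgZ
end

section
/- Let (Ω, F, P) be a probability space with a filtration (F_t)_{t ∈ [0,T]}, T > 0, and let Z : [0, T] × Ω → ℝ be product measurable with E[∫₀ᵀ |Z(s)|² ds] < ∞. Let δ > 0 and M ≥ 0, and suppose that for every pair of stopping times τ₁ ≤ τ₂ ≤ T with τ₂ − τ₁ ≤ δ almost surely and every stopping time θ ≤ τ₁, one has E[∫_{τ₁}^{τ₂} |Z(s)|² ds | F_θ] ≤ M almost surely. Then for every stopping time τ ≤ T, E[∫_τ^T |Z(s)|² ds | F_τ] ≤ (⌊T/δ⌋ + 1) · M almost surely. In particular, the bound sup_τ E[∫_τ^T |Z(s)|² ds | F_τ] < ∞ over all stopping times τ bounded by T holds. -/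
/-!
Cut `(τ, T]` at the stopping times `τₖ = (τ + kδ) ∧ T`, `k ≤ ⌊T/δ⌋ + 1`. Consecutive cuts are
at most `δ` apart and the last one is `T`, so `∫_τ^T |Z|²` is a sum of `⌊T/δ⌋ + 1` pieces, each of
whose conditional expectation given `F_τ` is at most `M` by hypothesis, applied with `θ = τ ≤ τₖ`.
-/

open MeasureTheory ProbabilityTheory Set Function

section IntegralOverRandomInterval

variable {Ω : Type*} [MeasurableSpace Ω]

theorem measurable_setLIntegral_Ioc {f : ℝ → Ω → ENNReal} (hf : Measurable (uncurry f))
    {u v : Ω → ℝ} (hu : Measurable u) (hv : Measurable v) :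
    Measurable fun ω => ∫⁻ s in Ioc (u ω) (v ω), f s ω := by
  simp_rw [← lintegral_indicator measurableSet_Ioc, indicator_apply, mem_Ioc]
  refine Measurable.lintegral_prod_right (f := fun ω s => if u ω < s ∧ s ≤ v ω then f s ω else 0)
    (Measurable.ite ?_ (hf.comp measurable_swap) measurable_const)
  exact (measurableSet_lt (hu.comp measurable_fst) measurable_snd).inter
    (measurableSet_le measurable_snd (hv.comp measurable_fst))

variable {f : ℝ → Ω → ℝ}

theorem setIntegral_Ioc_eq_toReal_setLIntegral (hf : Measurable (uncurry f))
    (hf0 : ∀ s ω, 0 ≤ f s ω) (a b : ℝ) (ω : Ω) :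
    ∫ s in Ioc a b, f s ω = (∫⁻ s in Ioc a b, ENNReal.ofReal (f s ω)).toReal :=
  integral_eq_lintegral_of_nonneg_ae (.of_forall (hf0 · ω))
    (hf.comp (measurable_id.prodMk measurable_const)).aestronglyMeasurable

theorem measurable_setIntegral_Ioc (hf : Measurable (uncurry f)) (hf0 : ∀ s ω, 0 ≤ f s ω)
    {u v : Ω → ℝ} (hu : Measurable u) (hv : Measurable v) :
    Measurable fun ω => ∫ s in Ioc (u ω) (v ω), f s ω := by
  simp_rw [setIntegral_Ioc_eq_toReal_setLIntegral hf hf0]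
  exact (measurable_setLIntegral_Ioc hf.ennreal_ofReal hu hv).ennreal_toReal

theorem integrable_setIntegral_Ioc (hf : Measurable (uncurry f)) (hf0 : ∀ s ω, 0 ≤ f s ω)
    {P : Measure Ω} {a b : ℝ}
    (hint : ∫⁻ ω, (∫⁻ s in Ioc a b, ENNReal.ofReal (f s ω)) ∂P < ⊤)
    {u v : Ω → ℝ} (hu : Measurable u) (hv : Measurable v) (hau : ∀ ω, a ≤ u ω)
    (hvb : ∀ ω, v ω ≤ b) :
    Integrable (fun ω => ∫ s in Ioc (u ω) (v ω), f s ω) P := by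
  refine ⟨(measurable_setIntegral_Ioc hf hf0 hu hv).aestronglyMeasurable, ?_⟩
  rw [hasFiniteIntegral_iff_ofReal (.of_forall fun ω => setIntegral_nonneg measurableSet_Ioc
    fun s _ => hf0 s ω)]
  refine lt_of_le_of_lt (lintegral_mono fun ω => ?_) hint
  rw [setIntegral_Ioc_eq_toReal_setLIntegral hf hf0]
  exact ENNReal.ofReal_toReal_le.trans (lintegral_mono_set (Ioc_subset_Ioc (hau ω) (hvb ω)))

theorem ae_integrableOn_Ioc (hf : Measurable (uncurry f)) (hf0 : ∀ s ω, 0 ≤ f s ω)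
    {P : Measure Ω} {a b : ℝ}
    (hint : ∫⁻ ω, (∫⁻ s in Ioc a b, ENNReal.ofReal (f s ω)) ∂P < ⊤) :
    ∀ᵐ ω ∂P, IntegrableOn (f · ω) (Ioc a b) := by
  filter_upwards [ae_lt_top (measurable_setLIntegral_Ioc hf.ennreal_ofReal measurable_const
    measurable_const) hint.ne] with ω hω
  refine ⟨(hf.comp (measurable_id.prodMk measurable_const)).aestronglyMeasurable, ?_⟩
  rwa [hasFiniteIntegral_iff_ofReal (.of_forall (hf0 · ω))]

end IntegralOverRandomInterval

theorem setIntegral_Ioc_eq_sum {f : ℝ → ℝ} {μ : Measure ℝ} {a : ℕ → ℝ} (ha : Monotone a) {n : ℕ}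
    (hf : IntegrableOn f (Ioc (a 0) (a n)) μ) :
    ∫ x in Ioc (a 0) (a n), f x ∂μ =
      ∑ k ∈ Finset.range n, ∫ x in Ioc (a k) (a (k + 1)), f x ∂μ := by
  rw [← intervalIntegral.integral_of_le (ha (Nat.zero_le n)),
    ← intervalIntegral.sum_integral_adjacent_intervals fun k hk => ?_]
  · exact Finset.sum_congr rfl fun k _ => intervalIntegral.integral_of_le (ha k.le_succ)
  rw [intervalIntegrable_iff_integrableOn_Ioc_of_le (ha k.le_succ)]
  exact hf.mono_set (Ioc_subset_Ioc (ha (Nat.zero_le k)) (ha hk))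

theorem condExp_le_card_mul_of_ae_eq_sum {Ω ι : Type*} {m m0 : MeasurableSpace Ω}
    {μ : Measure Ω} {f : Ω → ℝ} {g : ι → Ω → ℝ} {s : Finset ι} {M : ℝ}
    (hfg : f =ᵐ[μ] ∑ i ∈ s, g i) (hg : ∀ i ∈ s, Integrable (g i) μ)
    (hM : ∀ i ∈ s, ∀ᵐ ω ∂μ, μ[g i | m] ω ≤ M) :
    ∀ᵐ ω ∂μ, μ[f | m] ω ≤ s.card * M := by
  filter_upwards [condExp_congr_ae (m := m) hfg, condExp_finsetSum hg m,
    (Filter.eventually_all_finset s).2 hM] with ω hf hsum hle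
  calc μ[f | m] ω = ∑ i ∈ s, μ[g i | m] ω := by rw [hf, hsum, Finset.sum_apply]
    _ ≤ ∑ _i ∈ s, M := Finset.sum_le_sum hle
    _ = s.card * M := by rw [Finset.sum_const, nsmul_eq_mul]

theorem MeasureTheory.IsStoppingTime.measurable_real {Ω : Type*} {m0 : MeasurableSpace Ω}
    {F : Filtration ℝ m0} {τ : Ω → ℝ} (hτ : IsStoppingTime F fun ω => (τ ω : WithTop ℝ)) :
    Measurable τ := by
  simpa using hτ.measurable'.untopD 0

section PatchTimes

variable {Ω : Type*} {m0 : MeasurableSpace Ω}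

def patchTime (τ : Ω → ℝ) (δ T : ℝ) (k : ℕ) (ω : Ω) : ℝ := min (τ ω + k * δ) T

variable {τ : Ω → ℝ} {δ T : ℝ}

theorem patchTime_zero {ω : Ω} (hτ : τ ω ≤ T) : patchTime τ δ T 0 ω = τ ω := by
  simp [patchTime, hτ]

theorem patchTime_floor_add_one {ω : Ω} (hτ : 0 ≤ τ ω) (hδ : 0 < δ) :
    patchTime τ δ T (⌊T / δ⌋₊ + 1) ω = T := by
  have hT : T ≤ (⌊T / δ⌋₊ + 1) * δ := (div_le_iff₀ hδ).1 (Nat.lt_floor_add_one _).le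
  exact min_eq_right (by push_cast; linarith)

theorem monotone_patchTime (hδ : 0 ≤ δ) (ω : Ω) : Monotone fun k => patchTime τ δ T k ω :=
  fun _ _ hkl => min_le_min_right T (by gcongr)

theorem patchTime_succ_sub_le (hδ : 0 ≤ δ) (k : ℕ) (ω : Ω) :
    patchTime τ δ T (k + 1) ω - patchTime τ δ T k ω ≤ δ := by
  have : patchTime τ δ T (k + 1) ω ≤ patchTime τ δ T k ω + δ := by
    rw [patchTime, patchTime, ← min_add_add_right]
    exact min_le_min (by push_cast; linarith) (le_add_of_nonneg_right hδ)
  linarith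

theorem le_patchTime {ω : Ω} (hτ : τ ω ≤ T) (hδ : 0 ≤ δ) (k : ℕ) : τ ω ≤ patchTime τ δ T k ω :=
  le_min (le_add_of_nonneg_right (by positivity)) hτ

theorem patchTime_mem_Icc {ω : Ω} (hτ : τ ω ∈ Icc 0 T) (hδ : 0 ≤ δ) (k : ℕ) :
    patchTime τ δ T k ω ∈ Icc 0 T :=
  ⟨hτ.1.trans (le_patchTime hτ.2 hδ k), min_le_right _ _⟩

theorem MeasureTheory.IsStoppingTime.patchTime {F : Filtration ℝ m0}
    (hτ : IsStoppingTime F fun ω => (τ ω : WithTop ℝ)) (hδ : 0 ≤ δ) (k : ℕ) :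
    IsStoppingTime F fun ω => (patchTime τ δ T k ω : WithTop ℝ) := by
  simpa [_root_.patchTime, WithTop.coe_min, WithTop.coe_add] using
    (hτ.add_const (i := k * δ) (by positivity)).min_const T

end PatchTimes

theorem bmo_patching_general
    {Ω : Type*} {m0 : MeasurableSpace Ω} (P : Measure Ω)
    (F : Filtration ℝ m0) (T δ M : ℝ) (hδ : 0 < δ)
    (Z : ℝ → Ω → ℝ) (hZmeas : Measurable (Function.uncurry Z))
    (hZint : ∫⁻ ω, (∫⁻ s in Set.Ioc (0 : ℝ) T, ENNReal.ofReal (|Z s ω| ^ 2)) ∂P < ⊤)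
    (hsmall : ∀ (τ₁ τ₂ θ : Ω → ℝ),
      IsStoppingTime F (fun ω => (τ₁ ω : WithTop ℝ)) → IsStoppingTime F (fun ω => (τ₂ ω : WithTop ℝ)) →
      ∀ hθ : IsStoppingTime F (fun ω => (θ ω : WithTop ℝ)),
      (∀ ω, τ₁ ω ∈ Set.Icc (0 : ℝ) T) → (∀ ω, τ₂ ω ∈ Set.Icc (0 : ℝ) T) →
      (∀ ω, τ₁ ω ≤ τ₂ ω) → (∀ ω, τ₂ ω - τ₁ ω ≤ δ) → (∀ ω, θ ω ≤ τ₁ ω) →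
      ∀ᵐ ω ∂P,
        (P[(fun ω' => ∫ s in Set.Ioc (τ₁ ω') (τ₂ ω'), |Z s ω'| ^ 2) |
            hθ.measurableSpace]) ω ≤ M) :
    ∀ (τ : Ω → ℝ) (hτ : IsStoppingTime F (fun ω => (τ ω : WithTop ℝ))), (∀ ω, τ ω ∈ Set.Icc (0 : ℝ) T) →
      ∀ᵐ ω ∂P,
        (P[(fun ω' => ∫ s in Set.Ioc (τ ω') T, |Z s ω'| ^ 2) |
            hτ.measurableSpace]) ω ≤ ((Nat.floor (T / δ) : ℝ) + 1) * M := by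
  intro τ hτ hτT
  have hf : Measurable (uncurry fun s ω => |Z s ω| ^ 2) := hZmeas.abs.pow_const 2
  have hf0 : ∀ s ω, 0 ≤ |Z s ω| ^ 2 := fun _ _ => by positivity
  set τₖ := patchTime τ δ T
  have hτₖ : ∀ k, IsStoppingTime F fun ω => (τₖ k ω : WithTop ℝ) := (hτ.patchTime hδ.le ·)
  have hτₖT : ∀ k ω, τₖ k ω ∈ Icc 0 T := fun k ω => patchTime_mem_Icc (hτT ω) hδ.le k
  have hpieces : (fun ω => ∫ s in Ioc (τ ω) T, |Z s ω| ^ 2) =ᵐ[P]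
      ∑ k ∈ Finset.range (⌊T / δ⌋₊ + 1),
        fun ω => ∫ s in Ioc (τₖ k ω) (τₖ (k + 1) ω), |Z s ω| ^ 2 := by
    filter_upwards [ae_integrableOn_Ioc hf hf0 hZint] with ω hω
    have hsplit := setIntegral_Ioc_eq_sum (monotone_patchTime hδ.le ω) (n := ⌊T / δ⌋₊ + 1)
      (hω.mono_set (Ioc_subset_Ioc (hτₖT _ ω).1 (hτₖT _ ω).2))
    rw [patchTime_zero (hτT ω).2, patchTime_floor_add_one (hτT ω).1 hδ] at hsplit
    simpa only [Finset.sum_apply] using hsplit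
  have hbound := condExp_le_card_mul_of_ae_eq_sum (m := hτ.measurableSpace) hpieces
    (fun k _ => integrable_setIntegral_Ioc hf hf0 hZint (hτₖ k).measurable_real
      (hτₖ (k + 1)).measurable_real (fun ω => (hτₖT k ω).1) (fun ω => (hτₖT (k + 1) ω).2))
    (fun k _ => hsmall _ _ τ (hτₖ k) (hτₖ (k + 1)) hτ (hτₖT k) (hτₖT (k + 1))
      (fun ω => monotone_patchTime hδ.le ω k.le_succ) (patchTime_succ_sub_le hδ.le k)
      (fun ω => le_patchTime (hτT ω).2 hδ.le k))
  simpa using hbound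

/-- BMO patching argument. If `Z` is product measurable with
`E[∫₀ᵀ |Z(s)|² ds] < ∞` and for all stopping times `θ ≤ τ₁ ≤ τ₂ ≤ T` with
`τ₂ − τ₁ ≤ δ` one has `E[∫_{τ₁}^{τ₂} |Z(s)|² ds | F_θ] ≤ M` a.s., then for every
stopping time `τ ≤ T`, `E[∫_τ^T |Z(s)|² ds | F_τ] ≤ (⌊T/δ⌋ + 1) · M` a.s. -/
theorem bmo_patching
    {Ω : Type*} {m0 : MeasurableSpace Ω} (P : Measure Ω) [IsProbabilityMeasure P]
    (F : Filtration ℝ m0) (T δ M : ℝ) (hT : 0 < T) (hδ : 0 < δ) (hM : 0 ≤ M)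
    (Z : ℝ → Ω → ℝ) (hZmeas : Measurable (Function.uncurry Z))
    (hZint : ∫⁻ ω, (∫⁻ s in Set.Ioc (0 : ℝ) T, ENNReal.ofReal (|Z s ω| ^ 2)) ∂P < ⊤)
    (hsmall : ∀ (τ₁ τ₂ θ : Ω → ℝ),
      IsStoppingTime F (fun ω => (τ₁ ω : WithTop ℝ)) → IsStoppingTime F (fun ω => (τ₂ ω : WithTop ℝ)) →
      ∀ hθ : IsStoppingTime F (fun ω => (θ ω : WithTop ℝ)),
      (∀ ω, τ₁ ω ∈ Set.Icc (0 : ℝ) T) → (∀ ω, τ₂ ω ∈ Set.Icc (0 : ℝ) T) →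
      (∀ ω, τ₁ ω ≤ τ₂ ω) → (∀ ω, τ₂ ω - τ₁ ω ≤ δ) → (∀ ω, θ ω ≤ τ₁ ω) →
      ∀ᵐ ω ∂P,
        (P[(fun ω' => ∫ s in Set.Ioc (τ₁ ω') (τ₂ ω'), |Z s ω'| ^ 2) |
            hθ.measurableSpace]) ω ≤ M) :
    ∀ (τ : Ω → ℝ) (hτ : IsStoppingTime F (fun ω => (τ ω : WithTop ℝ))), (∀ ω, τ ω ∈ Set.Icc (0 : ℝ) T) →
      ∀ᵐ ω ∂P,
        (P[(fun ω' => ∫ s in Set.Ioc (τ ω') T, |Z s ω'| ^ 2) |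
            hτ.measurableSpace]) ω ≤ ((Nat.floor (T / δ) : ℝ) + 1) * M :=
  bmo_patching_general P F T δ M hδ Z hZmeas hZint hsmall
end
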